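/- arXiv:1408.6211 — 3 statements merged into one kernel-verified Lean document; each statement's English description precedes it below -/
import Mathlib

section
/- Subject to the constraint 1/(q₀₀ + n₀) + 1/(q₀ⱼ + nⱼ) = v/V for all j = 1,…,k (with all nⱼ equal amounts of posterior information for the experimental arms), the total sample size n₀ + n₁ + … + n_k is minimized by n_j = (1 + k^{-1/2})V/v − q₀ⱼ for j = 1,…,k and n₀ = (1 + k^{1/2})V/v − q₀₀, yielding allocation ratio (n₀+q₀₀)/(nⱼ+q₀ⱼ) = √k. -/
/-!
Write `x = q₀₀ + n₀`, `yⱼ = q₀ⱼ + nⱼ` and `c = v / V`, so the constraints read `x⁻¹ + yⱼ⁻¹ = c`.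
By Cauchy–Schwarz in Engel's form, `(1 + √k)² / c ≤ x + k yⱼ` for every `j`; averaging over the
`k` arms gives `(1 + √k)² / c ≤ x + ∑ⱼ yⱼ`, and the proposed allocation attains this bound.
-/

open Real Finset

lemma sq_add_div_inv_add_inv_le {x y : ℝ} (hx : 0 < x) (hy : 0 < y) (s t : ℝ) :
    (s + t) ^ 2 / (x⁻¹ + y⁻¹) ≤ s ^ 2 * x + t ^ 2 * y := by
  simpa [Fin.sum_univ_two, div_inv_eq_mul] using
    sq_sum_div_le_sum_sq_div univ ![s, t] (g := ![x⁻¹, y⁻¹])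
      (by simp [Fin.forall_fin_two, hx, hy])

lemma one_add_sqrt_card_sq_div_le_add_sum {ι : Type*} [Fintype ι] [Nonempty ι] {c x : ℝ}
    {y : ι → ℝ} (hx : 0 < x) (hy : ∀ i, 0 < y i) (h : ∀ i, x⁻¹ + (y i)⁻¹ = c) :
    (1 + √(Fintype.card ι)) ^ 2 / c ≤ x + ∑ i, y i := by
  set k : ℝ := (Fintype.card ι : ℝ)
  have hk : 0 < k := by positivity
  have hpair (i : ι) : (1 + √k) ^ 2 / c ≤ x + k * y i := by
    simpa [← h i, sq_sqrt hk.le] using sq_add_div_inv_add_inv_le hx (hy i) 1 √k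
  have hsum : k * ((1 + √k) ^ 2 / c) ≤ k * (x + ∑ i, y i) := by
    calc k * ((1 + √k) ^ 2 / c) = ∑ _i : ι, (1 + √k) ^ 2 / c := by simp [k]
      _ ≤ ∑ i, (x + k * y i) := sum_le_sum fun i _ => hpair i
      _ = k * (x + ∑ i, y i) := by simp [sum_add_distrib, ← mul_sum, k]; ring
  exact le_of_mul_le_mul_left hsum hk

theorem optimal_sample_sizes_general
    (k : ℕ) (hk : 1 ≤ k) (v V : ℝ) (hv : 0 < v) (hV : 0 < V)
    (q : Fin (k + 1) → ℝ) (hq : ∀ j, 0 ≤ q j)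
    (nopt : Fin (k + 1) → ℝ)
    (h0 : nopt 0 = (1 + Real.sqrt k) * V / v - q 0)
    (hjdef : ∀ j : Fin k, nopt j.succ = (1 + (Real.sqrt k)⁻¹) * V / v - q j.succ) :
    (∀ j : Fin k, 1 / (q 0 + nopt 0) + 1 / (q j.succ + nopt j.succ) = v / V) ∧
    (∀ j : Fin k, (nopt 0 + q 0) / (nopt j.succ + q j.succ) = Real.sqrt k) ∧
    (∀ n : Fin (k + 1) → ℝ, (∀ j, 0 < n j) →
      (∀ j : Fin k, 1 / (q 0 + n 0) + 1 / (q j.succ + n j.succ) = v / V) →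
      ∑ j, nopt j ≤ ∑ j, n j) := by
  have : Nonempty (Fin k) := ⟨⟨0, hk⟩⟩
  have hs : 0 < √(k : ℝ) := sqrt_pos.2 (by exact_mod_cast hk)
  have hss : √(k : ℝ) * √k = k := mul_self_sqrt (Nat.cast_nonneg k)
  have hopt0 : q 0 + nopt 0 = (1 + √k) * V / v := by rw [h0]; ring
  have hoptj (j : Fin k) : q j.succ + nopt j.succ = (1 + (√k)⁻¹) * V / v := by rw [hjdef]; ring
  have hsum_eq (n : Fin (k + 1) → ℝ) :
      ∑ j, n j = (q 0 + n 0) + ∑ j : Fin k, (q j.succ + n j.succ) - ∑ j, q j := by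
    simp only [Fin.sum_univ_succ, sum_add_distrib]; ring
  have hopt_total : (q 0 + nopt 0) + ∑ j : Fin k, (q j.succ + nopt j.succ) =
      (1 + √k) ^ 2 / (v / V) := by
    simp only [hopt0, hoptj, sum_const, card_univ, Fintype.card_fin, nsmul_eq_mul]
    field_simp
    linear_combination (-(1 + √(k : ℝ))) * hss
  refine ⟨fun j => ?_, fun j => ?_, fun n hn hcon => ?_⟩
  · rw [hopt0, hoptj]; field_simp; ring
  · rw [add_comm (nopt 0), hopt0, add_comm (nopt _), hoptj]; field_simp; ring
  · have hbound := one_add_sqrt_card_sq_div_le_add_sum (c := v / V)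
      (add_pos_of_nonneg_of_pos (hq 0) (hn 0))
      (fun j : Fin k => add_pos_of_nonneg_of_pos (hq j.succ) (hn j.succ))
      (fun j => by simpa only [one_div] using hcon j)
    rw [Fintype.card_fin] at hbound
    rw [hsum_eq nopt, hsum_eq n, hopt_total]
    linarith

/-- Subject to the information constraints `1/(q₀₀ + n₀) + 1/(q₀ⱼ + nⱼ) = v/V` for each of the
`k` experimental arms, the total sample size is minimized by
`nⱼ = (1 + k^{-1/2}) V/v − q₀ⱼ` and `n₀ = (1 + k^{1/2}) V/v − q₀₀`, giving allocation ratio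
`(n₀ + q₀₀)/(nⱼ + q₀ⱼ) = √k`. -/
theorem optimal_sample_sizes
    (k : ℕ) (hk : 1 ≤ k) (v V : ℝ) (hv : 0 < v) (hV : 0 < V)
    (q : Fin (k + 1) → ℝ) (hq : ∀ j, 0 ≤ q j)
    (nopt : Fin (k + 1) → ℝ)
    (h0 : nopt 0 = (1 + Real.sqrt k) * V / v - q 0)
    (hjdef : ∀ j : Fin k, nopt j.succ = (1 + (Real.sqrt k)⁻¹) * V / v - q j.succ)
    (hpos : ∀ j, 0 < nopt j) :
    (∀ j : Fin k, 1 / (q 0 + nopt 0) + 1 / (q j.succ + nopt j.succ) = v / V) ∧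
    (∀ j : Fin k, (nopt 0 + q 0) / (nopt j.succ + q j.succ) = Real.sqrt k) ∧
    (∀ n : Fin (k + 1) → ℝ, (∀ j, 0 < n j) →
      (∀ j : Fin k, 1 / (q 0 + n 0) + 1 / (q j.succ + n j.succ) = v / V) →
      ∑ j, nopt j ≤ ∑ j, n j) :=
  optimal_sample_sizes_general k hk v V hv hV q hq nopt h0 hjdef
end

section
/- If μ₀ ~ N(μ₁₀, (q₁₀v)⁻¹) independently of μ_j ~ N(μ_{1j}, (q_{1j}v)⁻¹), j = 1,…,k, and δ_j = μ_j − μ₀, then P(δ_j < δ* for all j) = ∫ [∏_{j=1}^k Φ(u√(q_{1j}/q₁₀) + (δ* − δ_{1j})√(q_{1j}v))] φ(u) du, where δ_{1j} = μ_{1j} − μ₁₀. -/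
/-!
Independence makes the joint law of `(μ₀, …, μ_k)` the product of its Gaussian marginals.
Fixing the first coordinate `μ₀ = x` (Fubini), the event factorises into the independent events
`μ_j < x + δ*`, of probability `Φ((x + δ* − μ_{1j}) √(q_{1j} v))`; the substitution
`x = μ₁₀ + u / √(q₁₀ v)` turns the outer Gaussian integral into one against `φ(u) du`.
-/

open MeasureTheory ProbabilityTheory Real

noncomputable def stdNormalPdf (u : ℝ) : ℝ :=
  (Real.sqrt (2 * π))⁻¹ * Real.exp (-u ^ 2 / 2)

noncomputable def stdNormalCdf (x : ℝ) : ℝ :=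
  ∫ u in Set.Iic x, stdNormalPdf u

lemma stdNormalPdf_eq_gaussianPDFReal : stdNormalPdf = gaussianPDFReal 0 1 := by
  funext x
  simp [stdNormalPdf, gaussianPDFReal]

lemma stdNormalPdf_nonneg (x : ℝ) : 0 ≤ stdNormalPdf x := by
  rw [stdNormalPdf_eq_gaussianPDFReal]
  exact gaussianPDFReal_nonneg 0 1 x

@[fun_prop]
lemma measurable_stdNormalPdf : Measurable stdNormalPdf := by
  rw [stdNormalPdf_eq_gaussianPDFReal]
  exact measurable_gaussianPDFReal 0 1

lemma stdNormalCdf_nonneg (x : ℝ) : 0 ≤ stdNormalCdf x :=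
  setIntegral_nonneg measurableSet_Iic fun u _ => stdNormalPdf_nonneg u

lemma monotone_stdNormalCdf : Monotone stdNormalCdf := by
  intro a b hab
  refine setIntegral_mono_set ?_ (.of_forall stdNormalPdf_nonneg)
    (.of_forall (Set.Iic_subset_Iic.mpr hab))
  rw [stdNormalPdf_eq_gaussianPDFReal]
  exact (integrable_gaussianPDFReal 0 1).integrableOn

@[fun_prop]
lemma measurable_stdNormalCdf : Measurable stdNormalCdf :=
  monotone_stdNormalCdf.measurable

lemma gaussianReal_zero_one_Iio (x : ℝ) :
    gaussianReal 0 1 (Set.Iio x) = ENNReal.ofReal (stdNormalCdf x) := by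
  rw [gaussianReal_apply_eq_integral 0 one_ne_zero, stdNormalCdf,
    integral_Iic_eq_integral_Iio, stdNormalPdf_eq_gaussianPDFReal]

section Precision

variable {w : ℝ}

lemma gaussianReal_toNNReal_inv_eq_map (hw : 0 < w) (m : ℝ) :
    gaussianReal m (Real.toNNReal w⁻¹) = (gaussianReal 0 1).map (fun u => u / √w + m) := by
  have hcomp : (fun u : ℝ => u / √w + m) = (· + m) ∘ (· / √w) := rfl
  rw [hcomp, ← Measure.map_map (by fun_prop) (by fun_prop), gaussianReal_map_div_const,
    gaussianReal_map_add_const, zero_div, zero_add]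
  congr 1
  ext
  simp [Real.sq_sqrt hw.le, hw.le]

lemma gaussianReal_toNNReal_inv_Iio (hw : 0 < w) (m t : ℝ) :
    gaussianReal m (Real.toNNReal w⁻¹) (Set.Iio t)
      = ENNReal.ofReal (stdNormalCdf ((t - m) * √w)) := by
  have hsqrt : 0 < √w := Real.sqrt_pos.mpr hw
  have hpre : (fun u : ℝ => u / √w + m) ⁻¹' Set.Iio t = Set.Iio ((t - m) * √w) := by
    ext u
    simp only [Set.mem_preimage, Set.mem_Iio, ← lt_sub_iff_add_lt, div_lt_iff₀ hsqrt]
  rw [gaussianReal_toNNReal_inv_eq_map hw, Measure.map_apply (by fun_prop) measurableSet_Iio,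
    hpre, gaussianReal_zero_one_Iio]

lemma lintegral_gaussianReal_toNNReal_inv (hw : 0 < w) (m : ℝ) {f : ℝ → ENNReal}
    (hf : Measurable f) :
    ∫⁻ x, f x ∂gaussianReal m (Real.toNNReal w⁻¹)
      = ∫⁻ u, f (u / √w + m) * ENNReal.ofReal (stdNormalPdf u) := by
  rw [gaussianReal_toNNReal_inv_eq_map hw, lintegral_map hf (by fun_prop),
    gaussianReal_of_var_ne_zero 0 one_ne_zero,
    lintegral_withDensity_eq_lintegral_mul _ (measurable_gaussianPDF 0 1)
      (show Measurable fun u : ℝ => f (u / √w + m) by fun_prop)]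
  refine lintegral_congr fun u => ?_
  simp only [Pi.mul_apply, gaussianPDF, ← stdNormalPdf_eq_gaussianPDFReal]
  exact mul_comm _ _

end Precision

lemma measurableSet_setOf_forall_succ_sub_zero_lt (k : ℕ) (δ : ℝ) :
    MeasurableSet {x : Fin (k + 1) → ℝ | ∀ j : Fin k, x j.succ - x 0 < δ} := by
  simp only [Set.ofPred_forall]
  exact .iInter fun _ => measurableSet_lt (by fun_prop) measurable_const

lemma pi_setOf_forall_succ_sub_zero_lt {k : ℕ} (ν : Fin (k + 1) → Measure ℝ)
    [∀ i, SigmaFinite (ν i)] (δ : ℝ) :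
    Measure.pi ν {x | ∀ j : Fin k, x j.succ - x 0 < δ}
      = ∫⁻ x, ∏ j : Fin k, ν j.succ (Set.Iio (x + δ)) ∂ν 0 := by
  set T : Set (ℝ × (Fin k → ℝ)) := {p | ∀ j : Fin k, p.2 j - p.1 < δ}
  have hT : MeasurableSet T := by
    simp only [T, Set.ofPred_forall]
    exact .iInter fun _ => measurableSet_lt (by fun_prop) measurable_const
  have hslice (x : ℝ) : Prod.mk x ⁻¹' T = Set.univ.pi fun _ => Set.Iio (x + δ) := by
    ext y
    simp [T, sub_lt_iff_lt_add']
  rw [show {x : Fin (k + 1) → ℝ | ∀ j : Fin k, x j.succ - x 0 < δ}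
      = MeasurableEquiv.piFinSuccAbove (fun _ => ℝ) 0 ⁻¹' T from rfl,
    (measurePreserving_piFinSuccAbove ν 0).measure_preimage_equiv T, Measure.prod_apply hT]
  refine lintegral_congr fun x => ?_
  simp only [hslice, Measure.pi_pi, Fin.zero_succAbove]

lemma toReal_gaussian_pi_setOf_forall_succ_sub_zero_lt {k : ℕ} {w : Fin (k + 1) → ℝ}
    (hw : ∀ i, 0 < w i) (m : Fin (k + 1) → ℝ) (δ : ℝ) :
    (Measure.pi (fun i => gaussianReal (m i) (Real.toNNReal (w i)⁻¹))
        {x | ∀ j : Fin k, x j.succ - x 0 < δ}).toReal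
      = ∫ u, (∏ j : Fin k, stdNormalCdf (u * √(w j.succ / w 0)
          + (δ - (m j.succ - m 0)) * √(w j.succ))) * stdNormalPdf u := by
  set F : ℝ → ℝ := fun x => ∏ j : Fin k, stdNormalCdf ((x + δ - m j.succ) * √(w j.succ))
  have hF : Measurable F := by fun_prop
  have hcdf (x : ℝ) : ∏ j : Fin k,
      gaussianReal (m j.succ) (Real.toNNReal (w j.succ)⁻¹) (Set.Iio (x + δ))
        = ENNReal.ofReal (F x) := by
    rw [ENNReal.ofReal_prod_of_nonneg fun j _ => stdNormalCdf_nonneg _]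
    exact Finset.prod_congr rfl fun j _ => gaussianReal_toNNReal_inv_Iio (hw j.succ) _ _
  have hsubst (u : ℝ) : F (u / √(w 0) + m 0) = ∏ j : Fin k,
      stdNormalCdf (u * √(w j.succ / w 0) + (δ - (m j.succ - m 0)) * √(w j.succ)) := by
    refine Finset.prod_congr rfl fun j _ => congrArg stdNormalCdf ?_
    rw [Real.sqrt_div (hw j.succ).le]
    ring
  rw [pi_setOf_forall_succ_sub_zero_lt, lintegral_congr hcdf,
    lintegral_gaussianReal_toNNReal_inv (hw 0) (m 0) hF.ennreal_ofReal,
    integral_eq_lintegral_of_nonneg_ae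
      (.of_forall fun u => mul_nonneg (Finset.prod_nonneg fun j _ => stdNormalCdf_nonneg _)
        (stdNormalPdf_nonneg u))
      (by fun_prop)]
  simp only [← hsubst]
  exact congrArg ENNReal.toReal <| lintegral_congr fun u =>
    (ENNReal.ofReal_mul (Finset.prod_nonneg fun j _ => stdNormalCdf_nonneg _)).symm

theorem gamma_probability_formula_general
    (k : ℕ) {Ω : Type*} [MeasureSpace Ω]
    (v : ℝ) (hv : 0 < v) (q : Fin (k + 1) → ℝ) (hq : ∀ j, 0 < q j)
    (m : Fin (k + 1) → ℝ) (μ : Fin (k + 1) → Ω → ℝ)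
    (hmeas : ∀ j, Measurable (μ j))
    (hindep : iIndepFun μ ℙ)
    (hlaw : ∀ j, Measure.map (μ j) ℙ = gaussianReal (m j) (Real.toNNReal (q j * v)⁻¹))
    (δstar : ℝ) :
    (ℙ {ω | ∀ j : Fin k, μ j.succ ω - μ 0 ω < δstar}).toReal
      = ∫ u : ℝ, (∏ j : Fin k,
          stdNormalCdf (u * Real.sqrt (q j.succ / q 0)
            + (δstar - (m j.succ - m 0)) * Real.sqrt (q j.succ * v))) * stdNormalPdf u := by
  have hjoint : Measure.map (fun ω i => μ i ω) ℙ
      = Measure.pi fun i => gaussianReal (m i) (Real.toNNReal (q i * v)⁻¹) := by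
    rw [hindep.map_fun_eq_pi_map fun i => (hmeas i).aemeasurable]
    simp only [hlaw]
  have hevent : ℙ {ω | ∀ j : Fin k, μ j.succ ω - μ 0 ω < δstar}
      = Measure.map (fun ω i => μ i ω) ℙ {x | ∀ j : Fin k, x j.succ - x 0 < δstar} :=
    (Measure.map_apply (measurable_pi_lambda _ hmeas)
      (measurableSet_setOf_forall_succ_sub_zero_lt k δstar)).symm
  have hratio (j : Fin k) : q j.succ * v / (q 0 * v) = q j.succ / q 0 :=
    mul_div_mul_right _ _ hv.ne'
  rw [hevent, hjoint,
    toReal_gaussian_pi_setOf_forall_succ_sub_zero_lt (fun i => mul_pos (hq i) hv)]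
  simp only [hratio]

/-- If `μ₀ ~ N(μ₁₀, (q₁₀ v)⁻¹)` independently of `μ_j ~ N(μ_{1j}, (q_{1j} v)⁻¹)` for
`j = 1,…,k`, and `δ_j = μ_j − μ₀`, then
`P(∀ j, δ_j < δ*) = ∫ ∏_j Φ(u √(q_{1j}/q₁₀) + (δ* − δ_{1j}) √(q_{1j} v)) φ(u) du`,
where `δ_{1j} = μ_{1j} − μ₁₀`. -/
theorem gamma_probability_formula
    (k : ℕ) {Ω : Type*} [MeasureSpace Ω] [IsProbabilityMeasure (ℙ : Measure Ω)]
    (v : ℝ) (hv : 0 < v) (q : Fin (k + 1) → ℝ) (hq : ∀ j, 0 < q j)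
    (m : Fin (k + 1) → ℝ) (μ : Fin (k + 1) → Ω → ℝ)
    (hmeas : ∀ j, Measurable (μ j))
    (hindep : iIndepFun μ ℙ)
    (hlaw : ∀ j, Measure.map (μ j) ℙ = gaussianReal (m j) (Real.toNNReal (q j * v)⁻¹))
    (δstar : ℝ) :
    (ℙ {ω | ∀ j : Fin k, μ j.succ ω - μ 0 ω < δstar}).toReal
      = ∫ u : ℝ, (∏ j : Fin k,
          stdNormalCdf (u * Real.sqrt (q j.succ / q 0)
            + (δstar - (m j.succ - m 0)) * Real.sqrt (q j.succ * v))) * stdNormalPdf u :=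
  gamma_probability_formula_general k v hv q hq m μ hmeas hindep hlaw δstar
end

section
/- In the normal-gamma model, β₁ = β₀/(1 − B) where B = K/(K + J₀) ~ Beta(n/2, α₀); hence β₁ ≤ β₀/(1 − Beta(n/2, α₀, ξ)) with (prior predictive) probability ξ, where Beta(a, b, ξ) is the ξ-quantile of a Beta(a,b) distribution. -/
/-!
Writing `(x, y) = (s u, s (1 - u))`, a change of variables with Jacobian `s`, the product of the
`Gamma(a, r)` and `Gamma(b, r)` densities at `(x, y)` becomes
`betaPdf a b u * gammaPdf (a + b) r s`; integrating out `s` shows that `x / (x + y)` has the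
`Beta(a, b)` law. Since `K, J₀ > 0` almost surely, `B < 1` almost surely, which forces `q < 1`;
as `x ↦ β₀ / (1 - x)` is increasing on `(-∞, 1)`, the events `β₁ ≤ β₀ / (1 - q)` and `B ≤ q`
then differ by a null set.
-/

open MeasureTheory ProbabilityTheory Real

/-- Gamma density with shape `a` and rate `b`; `gammaPdf (ν/2) (1/2)` is the chi-squared
density with `ν` degrees of freedom. -/
noncomputable def gammaPdf (a b x : ℝ) : ℝ :=
  if 0 < x then b ^ a / Real.Gamma a * x ^ (a - 1) * Real.exp (-(b * x)) else 0

/-- Beta density with parameters `a` and `b`. -/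
noncomputable def betaPdf (a b x : ℝ) : ℝ :=
  if 0 < x ∧ x < 1 then
    Real.Gamma (a + b) / (Real.Gamma a * Real.Gamma b) * x ^ (a - 1) * (1 - x) ^ (b - 1)
  else 0

open scoped ENNReal
open Set ContinuousLinearMap

lemma gammaPdf_of_nonpos {a r x : ℝ} (hx : x ≤ 0) : gammaPdf a r x = 0 :=
  if_neg hx.not_gt

lemma betaPdf_of_notMem_Ioo {a b x : ℝ} (hx : x ∉ Ioo 0 1) : betaPdf a b x = 0 :=
  if_neg hx

lemma gammaPdf_nonneg {a r : ℝ} (ha : 0 < a) (hr : 0 < r) (x : ℝ) : 0 ≤ gammaPdf a r x := by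
  unfold gammaPdf; split_ifs <;> positivity

@[fun_prop]
lemma measurable_gammaPdf (a r : ℝ) : Measurable (gammaPdf a r) :=
  Measurable.ite measurableSet_Ioi (by fun_prop) measurable_const

@[fun_prop]
lemma measurable_betaPdf (a b : ℝ) : Measurable (betaPdf a b) :=
  Measurable.ite measurableSet_Ioo (by fun_prop) measurable_const

lemma ofReal_gammaPdf_ae_eq_gammaPDF (a r : ℝ) :
    (fun x => ENNReal.ofReal (gammaPdf a r x)) =ᵐ[volume] gammaPDF a r := by
  filter_upwards [Measure.ae_ne volume 0] with x hx
  rcases hx.lt_or_gt with hneg | hpos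
  · rw [gammaPdf_of_nonpos hneg.le, gammaPDF_of_neg hneg, ENNReal.ofReal_zero]
  · rw [gammaPdf, if_pos hpos, gammaPDF_of_nonneg hpos.le]

lemma setLIntegral_Ioi_gammaPdf {a r : ℝ} (ha : 0 < a) (hr : 0 < r) :
    ∫⁻ x in Ioi 0, ENNReal.ofReal (gammaPdf a r x) = 1 := by
  rw [setLIntegral_eq_of_support_subset, lintegral_congr_ae (ofReal_gammaPdf_ae_eq_gammaPDF a r),
    lintegral_gammaPDF_eq_one ha hr]
  intro x hx
  by_contra hx0
  exact hx (by simp [gammaPdf_of_nonpos (not_lt.1 hx0)])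

lemma ae_pos_of_map_eq_withDensity_gammaPdf {Ω : Type*} [MeasurableSpace Ω] {μ : Measure Ω}
    {X : Ω → ℝ} (hX : AEMeasurable X μ) {a r : ℝ}
    (hlaw : μ.map X = volume.withDensity fun x => ENNReal.ofReal (gammaPdf a r x)) :
    ∀ᵐ ω ∂μ, 0 < X ω := by
  refine ae_of_ae_map hX ?_
  rw [hlaw, ae_withDensity_iff (by fun_prop)]
  refine ae_of_all _ fun x hx => ?_
  by_contra hx0
  exact hx (by rw [gammaPdf_of_nonpos (not_lt.1 hx0), ENNReal.ofReal_zero])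

lemma mul_gammaPdf_mul_gammaPdf {a b r u s : ℝ} (ha : 0 < a) (hb : 0 < b) (hr : 0 < r)
    (hu : u ∈ Ioo 0 1) (hs : 0 < s) :
    s * (gammaPdf a r (s * u) * gammaPdf b r (s * (1 - u)))
      = betaPdf a b u * gammaPdf (a + b) r s := by
  obtain ⟨hu0, hu1⟩ := hu
  have hv0 : 0 < 1 - u := sub_pos.2 hu1
  have hpow : s * (s ^ (a - 1) * s ^ (b - 1)) = s ^ (a + b - 1) := by
    rw [← rpow_add hs, mul_comm, ← rpow_add_one hs.ne']
    ring_nf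
  have hexp : exp (-(r * (s * u))) * exp (-(r * (s * (1 - u)))) = exp (-(r * s)) := by
    rw [← exp_add]; ring_nf
  have hGab := (Gamma_pos_of_pos (add_pos ha hb)).ne'
  rw [gammaPdf, if_pos (mul_pos hs hu0), gammaPdf, if_pos (mul_pos hs hv0), betaPdf,
    if_pos ⟨hu0, hu1⟩, gammaPdf, if_pos hs, mul_rpow hs.le hu0.le, mul_rpow hs.le hv0.le,
    rpow_add hr, ← hpow, ← hexp]
  field_simp

noncomputable def splitByFraction (p : ℝ × ℝ) : ℝ × ℝ := (p.2 * p.1, p.2 * (1 - p.1))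

noncomputable def splitByFractionDeriv (p : ℝ × ℝ) : ℝ × ℝ →L[ℝ] ℝ × ℝ :=
  (p.2 • fst ℝ ℝ ℝ + p.1 • snd ℝ ℝ ℝ).prod ((-p.2) • fst ℝ ℝ ℝ + (1 - p.1) • snd ℝ ℝ ℝ)

lemma hasFDerivAt_splitByFraction (p : ℝ × ℝ) :
    HasFDerivAt splitByFraction (splitByFractionDeriv p) p := by
  have hfst : HasFDerivAt (Prod.fst : ℝ × ℝ → ℝ) (fst ℝ ℝ ℝ) p := hasFDerivAt_fst
  have hsnd : HasFDerivAt (Prod.snd : ℝ × ℝ → ℝ) (snd ℝ ℝ ℝ) p := hasFDerivAt_snd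
  have h := (hsnd.mul hfst).prodMk (hsnd.mul ((hasFDerivAt_const 1 p).sub hfst))
  refine h.congr_fderiv ?_
  ext <;> simp [splitByFractionDeriv]

lemma det_splitByFractionDeriv (p : ℝ × ℝ) : (splitByFractionDeriv p).det = p.2 := by
  rw [ContinuousLinearMap.det, ← LinearMap.det_toMatrix (Module.Basis.finTwoProd ℝ),
    Matrix.det_fin_two]
  simp [LinearMap.toMatrix_apply, splitByFractionDeriv, Module.Basis.finTwoProd]
  ring

lemma image_splitByFraction :
    splitByFraction '' (Ioo 0 1 ×ˢ Ioi 0) = Ioi 0 ×ˢ Ioi 0 := by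
  ext ⟨x, y⟩
  simp only [splitByFraction, mem_image, mem_prod, mem_Ioo, mem_Ioi, Prod.exists, Prod.mk.injEq]
  constructor
  · rintro ⟨u, s, ⟨⟨hu0, hu1⟩, hs⟩, rfl, rfl⟩
    exact ⟨mul_pos hs hu0, mul_pos hs (sub_pos.2 hu1)⟩
  · rintro ⟨hx, hy⟩
    have hxy : 0 < x + y := add_pos hx hy
    refine ⟨x / (x + y), x + y, ⟨⟨div_pos hx hxy, (div_lt_one hxy).2 (by linarith)⟩, hxy⟩, ?_, ?_⟩
    · field_simp
    · field_simp; ring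

lemma injOn_splitByFraction : InjOn splitByFraction (Ioo 0 1 ×ˢ Ioi 0) := by
  rintro ⟨u, s⟩ ⟨-, hs⟩ ⟨u', s'⟩ ⟨-, -⟩ h
  simp only [splitByFraction, Prod.mk.injEq] at h
  obtain ⟨h₁, h₂⟩ := h
  have hss' : s = s' := by linarith
  subst hss'
  exact Prod.ext (mul_left_cancel₀ (ne_of_gt hs) h₁) rfl

lemma lintegral_Ioi_prod_Ioi_eq_lintegral_splitByFraction {f : ℝ × ℝ → ℝ≥0∞}
    (hf : Measurable f) :
    ∫⁻ p in Ioi 0 ×ˢ Ioi 0, f p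
      = ∫⁻ u in Ioo 0 1, ∫⁻ s in Ioi 0, ENNReal.ofReal s * f (s * u, s * (1 - u)) := by
  have hderiv : ∀ p ∈ Ioo (0 : ℝ) 1 ×ˢ Ioi 0,
      HasFDerivWithinAt splitByFraction (splitByFractionDeriv p) (Ioo 0 1 ×ˢ Ioi 0) p :=
    fun p _ => (hasFDerivAt_splitByFraction p).hasFDerivWithinAt
  rw [← image_splitByFraction, lintegral_image_eq_lintegral_abs_det_fderiv_mul volume
    (measurableSet_Ioo.prod measurableSet_Ioi) hderiv injOn_splitByFraction]
  simp_rw [det_splitByFractionDeriv]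
  have hmeas : Measurable fun p : ℝ × ℝ => ENNReal.ofReal |p.2| * f (splitByFraction p) := by
    unfold splitByFraction; fun_prop
  rw [Measure.volume_eq_prod, ← Measure.prod_restrict, lintegral_prod _ hmeas.aemeasurable]
  refine setLIntegral_congr_fun measurableSet_Ioo fun u _ => ?_
  refine setLIntegral_congr_fun measurableSet_Ioi fun s (hs : 0 < s) => ?_
  rw [abs_of_pos hs]
  rfl

theorem map_div_add_prod_withDensity_gammaPdf {a b r : ℝ} (ha : 0 < a) (hb : 0 < b)
    (hr : 0 < r) :
    ((volume.withDensity fun x => ENNReal.ofReal (gammaPdf a r x)).prod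
        (volume.withDensity fun x => ENNReal.ofReal (gammaPdf b r x))).map
          (fun p : ℝ × ℝ => p.1 / (p.1 + p.2))
      = volume.withDensity fun x => ENNReal.ofReal (betaPdf a b x) := by
  refine Measure.ext_of_lintegral _ fun g hg => ?_
  have hratio : Measurable fun p : ℝ × ℝ => p.1 / (p.1 + p.2) := by fun_prop
  have hgr : Measurable fun p : ℝ × ℝ => g (p.1 / (p.1 + p.2)) := hg.comp hratio
  rw [lintegral_map hg hratio, prod_withDensity (by fun_prop) (by fun_prop),
    ← Measure.volume_eq_prod, lintegral_withDensity_eq_lintegral_mul _ (by fun_prop) hgr,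
    lintegral_withDensity_eq_lintegral_mul _ (by fun_prop) hg]
  simp only [Pi.mul_apply]
  calc ∫⁻ p : ℝ × ℝ, ENNReal.ofReal (gammaPdf a r p.1) * ENNReal.ofReal (gammaPdf b r p.2)
          * g (p.1 / (p.1 + p.2))
      = ∫⁻ p in Ioi 0 ×ˢ Ioi 0, ENNReal.ofReal (gammaPdf a r p.1)
          * ENNReal.ofReal (gammaPdf b r p.2) * g (p.1 / (p.1 + p.2)) := by
        refine (setLIntegral_eq_of_support_subset fun p hp => ?_).symm
        by_contra hpQ
        rw [mem_prod, not_and_or, mem_Ioi, mem_Ioi, not_lt, not_lt] at hpQ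
        rcases hpQ with h | h <;> simp [gammaPdf_of_nonpos h] at hp
    _ = ∫⁻ u in Ioo 0 1, ∫⁻ s in Ioi 0, ENNReal.ofReal (betaPdf a b u) * g u
          * ENNReal.ofReal (gammaPdf (a + b) r s) := by
        rw [lintegral_Ioi_prod_Ioi_eq_lintegral_splitByFraction (by fun_prop)]
        refine setLIntegral_congr_fun measurableSet_Ioo fun u hu => ?_
        refine setLIntegral_congr_fun measurableSet_Ioi fun s (hs : 0 < s) => ?_
        have hratio_eq : s * u / (s * u + s * (1 - u)) = u := by field_simp; ring
        rw [hratio_eq, ← ENNReal.ofReal_mul (gammaPdf_nonneg ha hr _), ← mul_assoc,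
          ← ENNReal.ofReal_mul hs.le, mul_gammaPdf_mul_gammaPdf ha hb hr hu hs,
          ENNReal.ofReal_mul' (gammaPdf_nonneg (add_pos ha hb) hr _)]
        ring
    _ = ∫⁻ u in Ioo 0 1, ENNReal.ofReal (betaPdf a b u) * g u := by
        refine setLIntegral_congr_fun measurableSet_Ioo fun u _ => ?_
        rw [lintegral_const_mul _ (by fun_prop), setLIntegral_Ioi_gammaPdf (add_pos ha hb) hr,
          mul_one]
    _ = ∫⁻ u, ENNReal.ofReal (betaPdf a b u) * g u := by
        refine setLIntegral_eq_of_support_subset fun u hu => ?_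
        by_contra hu01
        simp [betaPdf_of_notMem_Ioo hu01] at hu

lemma div_one_sub_le_div_one_sub_iff {c x y : ℝ} (hc : 0 < c) (hx : x < 1) (hy : y < 1) :
    c / (1 - x) ≤ c / (1 - y) ↔ x ≤ y := by
  rw [div_le_div_iff_of_pos_left hc (sub_pos.2 hx) (sub_pos.2 hy), sub_le_sub_iff_left]

theorem beta_one_quantile_bound_general
    (n : ℕ) (hn : 0 < n) (α₀ β₀ ξ : ℝ) (hα : 0 < α₀) (hβ : 0 < β₀)
    (hξ1 : ξ < 1)
    {Ω : Type*} [MeasureSpace Ω] [IsProbabilityMeasure (ℙ : Measure Ω)]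
    (K J₀ : Ω → ℝ) (hKmeas : Measurable K) (hJmeas : Measurable J₀)
    (hKlaw : Measure.map K ℙ
      = volume.withDensity (fun x => ENNReal.ofReal (gammaPdf ((n : ℝ) / 2) (1 / 2) x)))
    (hJlaw : Measure.map J₀ ℙ
      = volume.withDensity (fun x => ENNReal.ofReal (gammaPdf α₀ (1 / 2) x)))
    (hind : IndepFun K J₀ ℙ)
    (B β₁ : Ω → ℝ)
    (hB : ∀ ω, B ω = K ω / (K ω + J₀ ω))
    (hβ₁ : ∀ ω, β₁ ω = β₀ / (1 - B ω))
    (q : ℝ) (hq : ℙ {ω | B ω ≤ q} = ENNReal.ofReal ξ) :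
    Measure.map B ℙ
      = volume.withDensity (fun x => ENNReal.ofReal (betaPdf ((n : ℝ) / 2) α₀ x)) ∧
    ℙ {ω | β₁ ω ≤ β₀ / (1 - q)} = ENNReal.ofReal ξ := by
  have hB_eq : B = (fun p : ℝ × ℝ => p.1 / (p.1 + p.2)) ∘ fun ω => (K ω, J₀ ω) := funext hB
  refine ⟨?_, ?_⟩
  · rw [hB_eq, ← Measure.map_map (by fun_prop) (hKmeas.prodMk hJmeas),
      (indepFun_iff_map_prod_eq_prod_map_map hKmeas.aemeasurable hJmeas.aemeasurable).1 hind,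
      hKlaw, hJlaw, map_div_add_prod_withDensity_gammaPdf (by positivity) hα (by norm_num)]
  have hB_lt_one : ∀ᵐ ω ∂ℙ, B ω < 1 := by
    filter_upwards [ae_pos_of_map_eq_withDensity_gammaPdf hKmeas.aemeasurable hKlaw,
      ae_pos_of_map_eq_withDensity_gammaPdf hJmeas.aemeasurable hJlaw] with ω hK hJ
    rw [hB ω, div_lt_one (add_pos hK hJ)]
    linarith
  have hq_lt_one : q < 1 := by
    by_contra! hq1
    have h_ae_univ : {ω | B ω ≤ q} =ᵐ[ℙ] univ :=
      Filter.eventuallyEq_set.2 <| hB_lt_one.mono fun ω hω =>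
        iff_of_true (hω.le.trans hq1) trivial
    rw [measure_congr h_ae_univ, measure_univ] at hq
    exact (ENNReal.ofReal_lt_one.2 hξ1).ne' hq
  have h_sets : {ω | β₁ ω ≤ β₀ / (1 - q)} =ᵐ[ℙ] {ω | B ω ≤ q} :=
    Filter.eventuallyEq_set.2 (hB_lt_one.mono fun ω hω => by
      rw [mem_ofPred_eq, mem_ofPred_eq, hβ₁ ω, div_one_sub_le_div_one_sub_iff hβ hω hq_lt_one])
  rw [measure_congr h_sets, hq]

/-- In the normal-gamma model, `β₁ = β₀/(1 − B)` where `B = K/(K + J₀) ~ Beta(n/2, α₀)`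
(with `K = vH ~ χ²_n` and `J₀ = 2β₀v ~ χ²_{2α₀}` independent); hence
`β₁ ≤ β₀/(1 − Beta(n/2, α₀, ξ))` with prior predictive probability `ξ`, where
`Beta(a, b, ξ)` denotes the `ξ`-quantile of the Beta distribution. -/
theorem beta_one_quantile_bound
    (n : ℕ) (hn : 0 < n) (α₀ β₀ ξ : ℝ) (hα : 0 < α₀) (hβ : 0 < β₀)
    (hξ0 : 0 < ξ) (hξ1 : ξ < 1)
    {Ω : Type*} [MeasureSpace Ω] [IsProbabilityMeasure (ℙ : Measure Ω)]
    (K J₀ : Ω → ℝ) (hKmeas : Measurable K) (hJmeas : Measurable J₀)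
    (hKlaw : Measure.map K ℙ
      = volume.withDensity (fun x => ENNReal.ofReal (gammaPdf ((n : ℝ) / 2) (1 / 2) x)))
    (hJlaw : Measure.map J₀ ℙ
      = volume.withDensity (fun x => ENNReal.ofReal (gammaPdf α₀ (1 / 2) x)))
    (hind : IndepFun K J₀ ℙ)
    (B β₁ : Ω → ℝ)
    (hB : ∀ ω, B ω = K ω / (K ω + J₀ ω))
    (hβ₁ : ∀ ω, β₁ ω = β₀ / (1 - B ω))
    (q : ℝ) (hq : ℙ {ω | B ω ≤ q} = ENNReal.ofReal ξ) :
    Measure.map B ℙ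
      = volume.withDensity (fun x => ENNReal.ofReal (betaPdf ((n : ℝ) / 2) α₀ x)) ∧
    ℙ {ω | β₁ ω ≤ β₀ / (1 - q)} = ENNReal.ofReal ξ :=
  beta_one_quantile_bound_general n hn α₀ β₀ ξ hα hβ hξ1 K J₀ hKmeas hJmeas hKlaw hJlaw hind B β₁ hB
    hβ₁ q hq
end
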